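/- arXiv:1707.05762 — 4 statements merged into one kernel-verified Lean document; each statement's English description precedes it below -/
import Mathlib

section
/- Let T be the shift map on [0,1]^ℤ and let d_T(x,y)=∑_{k∈ℤ} 2^{−|k|} |x_k − y_k|. Then the upper metric mean dimension satisfies mdim([0,1]^ℤ, d_T, T) = 1. -/
open Filter Set Metric Function
open scoped ENNReal NNReal

noncomputable section

universe u

/-- A pair `(X̂, Y)` of random variables on a probability space `(Ω, P)` satisfying
condition `(*)_{n,ε,μ}`: `X̂` has law `μ` and the expected average distortion
`E[(1/n) ∑_{k<n} d(T^k X̂, Y_k)]` is at most `ε`. -/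
structure DistortionPair {X : Type u} [MetricSpace X] [MeasurableSpace X]
    (T : X → X) (μ : MeasureTheory.Measure X) (ε : ℝ) (n : ℕ) where
  Ω : Type u
  [mΩ : MeasurableSpace Ω]
  P : MeasureTheory.Measure Ω
  probP : MeasureTheory.IsProbabilityMeasure P
  Xh : Ω → X
  Y : Ω → Fin n → X
  measXh : Measurable Xh
  measY : Measurable Y
  law : MeasureTheory.Measure.map Xh P = μ
  distortion : ∫ ω, (∑ k : Fin n, dist (T^[(k : ℕ)] (Xh ω)) (Y ω k)) / n ∂P ≤ ε

open MeasureTheory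

section Defs

variable {X : Type u} [MetricSpace X]

/-- The Bowen dynamical distance `d_n(x,y) = max_{0 ≤ k ≤ n-1} d(T^k x, T^k y)`. -/
def dynDist (T : X → X) (n : ℕ) (x y : X) : ℝ :=
  (((Finset.range n).sup (fun k => nndist (T^[k] x) (T^[k] y)) : ℝ≥0) : ℝ)

/-- The `(n,ε)`-dynamical ball around `x`. -/
def dynBall (T : X → X) (n : ℕ) (x : X) (ε : ℝ) : Set X :=
  {y | dynDist T n x y < ε}

/-- `N_d(n,ε)`: the maximal cardinality of an `(n,ε)`-separated subset of `X`. -/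
def dynSepNum (T : X → X) (n : ℕ) (ε : ℝ) : ℕ :=
  sSup {m | ∃ E : Finset X, (∀ x ∈ E, ∀ y ∈ E, x ≠ y → ε < dynDist T n x y) ∧ E.card = m}

/-- `S(X,d,ε) = limsup_n (1/n) log N_d(n,ε)`. -/
def dynS (T : X → X) (ε : ℝ) : ℝ≥0∞ :=
  Filter.atTop.limsup fun n : ℕ =>
    ENNReal.ofReal (Real.log (dynSepNum T n ε)) / (n : ℝ≥0∞)

/-- The upper metric mean dimension `mdim(X,d,T) = limsup_{ε → 0⁺} S(X,d,ε)/|log ε|`. -/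
def mdim (T : X → X) : ℝ≥0∞ :=
  Filter.limsup (fun ε : ℝ => dynS T ε / ENNReal.ofReal |Real.log ε|)
    (nhdsWithin 0 (Set.Ioi 0))

/-- The topological entropy `h_top(X,T) = lim_{ε → 0⁺} S(X,d,ε)`
(the limit exists by monotonicity, hence equals the `limsup`). -/
def htop (T : X → X) : ℝ≥0∞ :=
  Filter.limsup (fun ε : ℝ => dynS T ε) (nhdsWithin 0 (Set.Ioi 0))

/-- `N_μ(n,ε,δ)`: the minimal number of `(n,ε)`-dynamical balls needed to cover a set of
`μ`-measure strictly bigger than `1 - δ`. -/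
def dynCovNum [MeasurableSpace X] (T : X → X) (μ : Measure X) (n : ℕ) (ε δ : ℝ) : ℕ :=
  sInf {m | ∃ F : Finset X, F.card = m ∧
    ENNReal.ofReal (1 - δ) < μ (⋃ x ∈ F, dynBall T n x ε)}

/-- `h_μ(ε,T,δ) = limsup_n (1/n) log N_μ(n,ε,δ)`. -/
def dynH [MeasurableSpace X] (T : X → X) (μ : Measure X) (ε δ : ℝ) : ℝ≥0∞ :=
  Filter.atTop.limsup fun n : ℕ =>
    ENNReal.ofReal (Real.log (dynCovNum T μ n ε δ)) / (n : ℝ≥0∞)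

/-- The average dynamical distance `d̃_n(x,y) = (1/n) ∑_{k<n} d(T^k x, T^k y)`. -/
def avgDist (T : X → X) (n : ℕ) (x y : X) : ℝ :=
  (∑ k ∈ Finset.range n, dist (T^[k] x) (T^[k] y)) / n

/-- The `(n,ε)`-average dynamical ball around `x`. -/
def avgBall (T : X → X) (n : ℕ) (x : X) (ε : ℝ) : Set X :=
  {y | avgDist T n x y < ε}

/-- `Ñ_d(n,ε)`: the maximal cardinality of an `(n,ε)`-average separated subset of `X`. -/
def avgSepNum (T : X → X) (n : ℕ) (ε : ℝ) : ℕ :=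
  sSup {m | ∃ E : Finset X, (∀ x ∈ E, ∀ y ∈ E, x ≠ y → ε < avgDist T n x y) ∧ E.card = m}

/-- `S̃(X,d,ε) = limsup_n (1/n) log Ñ_d(n,ε)`. -/
def avgS (T : X → X) (ε : ℝ) : ℝ≥0∞ :=
  Filter.atTop.limsup fun n : ℕ =>
    ENNReal.ofReal (Real.log (avgSepNum T n ε)) / (n : ℝ≥0∞)

/-- `Ñ_μ(n,ε,δ)`: the minimal number of `(n,ε)`-average dynamical balls needed to cover a set
of `μ`-measure strictly bigger than `1 - δ`. -/
def avgCovNum [MeasurableSpace X] (T : X → X) (μ : Measure X) (n : ℕ) (ε δ : ℝ) : ℕ :=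
  sInf {m | ∃ F : Finset X, F.card = m ∧
    ENNReal.ofReal (1 - δ) < μ (⋃ x ∈ F, avgBall T n x ε)}

/-- `h̃_μ(ε,T,δ) = limsup_n (1/n) log Ñ_μ(n,ε,δ)`. -/
def avgH [MeasurableSpace X] (T : X → X) (μ : Measure X) (ε δ : ℝ) : ℝ≥0∞ :=
  Filter.atTop.limsup fun n : ℕ =>
    ENNReal.ofReal (Real.log (avgCovNum T μ n ε δ)) / (n : ℝ≥0∞)

/-- `h̃_μ(T,δ) = lim_{ε → 0⁺} h̃_μ(ε,T,δ)` (the limit exists by monotonicity, hence equals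
the `limsup`). -/
def avgHlim [MeasurableSpace X] (T : X → X) (μ : Measure X) (δ : ℝ) : ℝ≥0∞ :=
  Filter.limsup (fun ε : ℝ => avgH T μ ε δ) (nhdsWithin 0 (Set.Ioi 0))

end Defs

/-- `N(ε)`: the maximal cardinality of an `ε`-separated subset of `Y`. -/
def sepNum (Y : Type*) [MetricSpace Y] (ε : ℝ) : ℕ :=
  sSup {m | ∃ E : Finset Y, (∀ x ∈ E, ∀ y ∈ E, x ≠ y → ε < dist x y) ∧ E.card = m}

/-- The upper box (Minkowski) dimension `limsup_{ε → 0⁺} log N(ε) / |log ε|`. -/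
def upperBoxDim (Y : Type*) [MetricSpace Y] : ℝ≥0∞ :=
  Filter.limsup
    (fun ε : ℝ => ENNReal.ofReal (Real.log (sepNum Y ε)) / ENNReal.ofReal |Real.log ε|)
    (nhdsWithin 0 (Set.Ioi 0))

section Entropy

variable {X : Type u} [MeasurableSpace X]

/-- The entropy contribution `-μ(A) log μ(A)` of one cell (nonnegative when `μ(A) ≤ 1`). -/
def cellEnt (μ : Measure X) (A : Set X) : ℝ≥0∞ :=
  ENNReal.ofReal (-((μ A).toReal * Real.log (μ A).toReal))

/-- `H_μ(P ∨ T⁻¹P ∨ ⋯ ∨ T^{-(n-1)}P)` for the finite partition `P` indexed by `Fin m`. -/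
def refinedEnt (μ : Measure X) (T : X → X) {m : ℕ} (P : Fin m → Set X) (n : ℕ) : ℝ≥0∞ :=
  ∑ s : Fin n → Fin m, cellEnt μ (⋂ k : Fin n, T^[(k : ℕ)] ⁻¹' P (s k))

/-- `h_μ(P,T) = inf_{n ≥ 1} (1/n) H_μ(Pⁿ)`. -/
def entPart (μ : Measure X) (T : X → X) {m : ℕ} (P : Fin m → Set X) : ℝ≥0∞ :=
  ⨅ n : ℕ, refinedEnt μ T P (n + 1) / ((n + 1 : ℕ) : ℝ≥0∞)

/-- The measure-theoretic (Kolmogorov–Sinai) entropy `h_μ(T) = sup_P h_μ(P,T)`, the supremum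
over all finite measurable partitions of `X`. -/
def KSentropy (μ : Measure X) (T : X → X) : ℝ≥0∞ :=
  ⨆ (m : ℕ) (P : Fin m → Set X) (_ : ∀ i, MeasurableSet (P i))
    (_ : Pairwise (Function.onFun Disjoint P)) (_ : (⋃ i, P i) = Set.univ),
    entPart μ T P

end Entropy

section RD

open scoped Classical in
/-- The Kullback–Leibler divergence `∫ log (dp/dq) dp` (with value `∞` if `p` is not
absolutely continuous w.r.t. `q` or the integrand is not integrable). -/
def klDiv {α : Type*} [MeasurableSpace α] (p q : Measure α) : ℝ≥0∞ :=
  if p ≪ q ∧ Integrable (fun x => Real.log (p.rnDeriv q x).toReal) p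
  then ENNReal.ofReal (∫ x, Real.log (p.rnDeriv q x).toReal ∂p)
  else ⊤

/-- The mutual information `I(U,V)`: the Kullback–Leibler divergence of the joint law of
`(U,V)` with respect to the product of the laws of `U` and `V`. -/
def mutualInfo {Ω α β : Type*} [MeasurableSpace Ω] [MeasurableSpace α] [MeasurableSpace β]
    (P : Measure Ω) (U : Ω → α) (V : Ω → β) : ℝ≥0∞ :=
  klDiv (Measure.map (fun ω => (U ω, V ω)) P)
    ((Measure.map U P).prod (Measure.map V P))

/-- The rate distortion function `R_μ(ε) = inf (1/n) I(X̂,Y)`, the infimum over all `n ≥ 1`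
and all pairs `(X̂,Y)` satisfying condition `(*)_{n,ε,μ}`. -/
def rateDistortion {X : Type u} [MetricSpace X] [MeasurableSpace X]
    (T : X → X) (μ : Measure X) (ε : ℝ) : ℝ≥0∞ :=
  ⨅ (n : ℕ) (_ : 0 < n) (pair : DistortionPair T μ ε n),
    @mutualInfo pair.Ω X (Fin n → X) pair.mΩ _ _ pair.P pair.Xh pair.Y / (n : ℝ≥0∞)

end RD

end

/-! Both bounds on `S(ε)` are `|log ε| + O(1)`. Upper bound: the weights `2^{-|k|}` outside
`[-K, K]` sum to at most `4·2^{-K}`, so two points whose coordinates in the window `[-K, n + K)`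
agree up to `η` are `(4η + 4·2^{-K})`-close for `d_n`; hence an `(n,ε)`-separated set injects
into the `η`-quantized windows and `N(n,ε) ≤ (⌊8/ε⌋ + 1)^{n+2K}`. Lower bound: since
`d(x,y) ≥ |x₀ - y₀|`, the sequences with values on a `2ε`-grid in the coordinates `0, …, n-1`
form an `(n,ε)`-separated set with `(⌊1/(2ε)⌋ + 1)^n` points. -/

open Topology

section Dynamics

variable {X : Type*} [MetricSpace X] {T : X → X} {n : ℕ} {ε : ℝ}

def IsDynSeparated (T : X → X) (n : ℕ) (ε : ℝ) (E : Finset X) : Prop :=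
  (E : Set X).Pairwise fun x y => ε < dynDist T n x y

theorem dist_iterate_le_dynDist {j : ℕ} (hj : j < n) (x y : X) :
    dist (T^[j] x) (T^[j] y) ≤ dynDist T n x y := by
  rw [← coe_nndist]
  exact NNReal.coe_le_coe.2
    (Finset.le_sup (f := fun k => nndist (T^[k] x) (T^[k] y)) (Finset.mem_range.2 hj))

theorem dynDist_le {c : ℝ} (hc : 0 ≤ c) {x y : X}
    (h : ∀ j < n, dist (T^[j] x) (T^[j] y) ≤ c) : dynDist T n x y ≤ c := by
  lift c to ℝ≥0 using hc
  exact NNReal.coe_le_coe.2 (Finset.sup_le fun j hj => h j (Finset.mem_range.1 hj))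

theorem IsDynSeparated.card_le_of_dynDist_le {F : Type*} [Fintype F] (φ : X → F)
    (hφ : ∀ x y, φ x = φ y → dynDist T n x y ≤ ε) {E : Finset X}
    (hE : IsDynSeparated T n ε E) : E.card ≤ Fintype.card F :=
  Finset.card_le_card_of_injOn φ (fun _ _ => Finset.mem_coe.2 (Finset.mem_univ _))
    fun x hx y hy hxy => by_contra fun hne => (hE hx hy hne).not_ge (hφ x y hxy)

theorem dynSepNum_le {C : ℕ} (h : ∀ E, IsDynSeparated T n ε E → E.card ≤ C) :
    dynSepNum T n ε ≤ C :=
  csSup_le ⟨0, ∅, by simp, rfl⟩ (by rintro _ ⟨E, hE, rfl⟩; exact h E hE)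

theorem IsDynSeparated.card_le_dynSepNum {C : ℕ} (h : ∀ E, IsDynSeparated T n ε E → E.card ≤ C)
    {E : Finset X} (hE : IsDynSeparated T n ε E) : E.card ≤ dynSepNum T n ε :=
  le_csSup ⟨C, by rintro _ ⟨E', hE', rfl⟩; exact h E' hE'⟩ ⟨E, hE, rfl⟩

theorem dynS_le_ofReal_log {B c : ℕ} (h : ∀ n, dynSepNum T n ε ≤ B ^ (n + c)) :
    dynS T ε ≤ ENNReal.ofReal (Real.log B) := by
  have hlog (n : ℕ) : Real.log (dynSepNum T n ε) ≤ (n + c) * Real.log B := by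
    rcases (dynSepNum T n ε).eq_zero_or_pos with h0 | hpos
    · rw [h0, Nat.cast_zero, Real.log_zero]
      positivity
    · calc Real.log (dynSepNum T n ε) ≤ Real.log ((B : ℝ) ^ (n + c)) :=
            Real.log_le_log (by exact_mod_cast hpos) (by exact_mod_cast h n)
        _ = (n + c) * Real.log B := by rw [Real.log_pow]; push_cast; ring
  have hlim : Tendsto (fun n : ℕ => ENNReal.ofReal ((1 + c / n) * Real.log B)) atTop
      (𝓝 (ENNReal.ofReal (Real.log B))) := by
    refine (ENNReal.continuous_ofReal.tendsto _).comp ?_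
    simpa using ((tendsto_const_div_atTop_nhds_zero_nat (c : ℝ)).const_add 1).mul_const
      (Real.log B)
  refine (limsup_le_limsup ?_).trans hlim.limsup_eq.le
  filter_upwards [eventually_gt_atTop 0] with n hn
  have hn' : (0 : ℝ) < n := Nat.cast_pos.2 hn
  rw [← ENNReal.ofReal_natCast, ← ENNReal.ofReal_div_of_pos hn']
  refine ENNReal.ofReal_le_ofReal ?_
  calc Real.log (dynSepNum T n ε) / n ≤ (n + c) * Real.log B / n := by gcongr; exact hlog n
    _ = (1 + c / n) * Real.log B := by field_simp

theorem ofReal_log_le_dynS {M : ℕ} (h : ∀ n, M ^ n ≤ dynSepNum T n ε) :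
    ENNReal.ofReal (Real.log M) ≤ dynS T ε := by
  rcases M.eq_zero_or_pos with rfl | hM
  · simp
  refine le_limsup_of_frequently_le (Eventually.frequently ?_)
  filter_upwards [eventually_gt_atTop 0] with n hn
  have hn' : (0 : ℝ) < n := Nat.cast_pos.2 hn
  rw [← ENNReal.ofReal_natCast, ← ENNReal.ofReal_div_of_pos hn']
  refine ENNReal.ofReal_le_ofReal ((le_div_iff₀ hn').2 ?_)
  calc Real.log M * n = Real.log ((M : ℝ) ^ n) := by rw [Real.log_pow, mul_comm]
    _ ≤ Real.log (dynSepNum T n ε) :=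
      Real.log_le_log (by positivity) (by exact_mod_cast h n)

theorem tendsto_ofReal_log_div_div_ofReal_abs_log {C : ℝ} (hC : 0 < C) :
    Tendsto (fun ε : ℝ => ENNReal.ofReal (Real.log (C / ε)) / ENNReal.ofReal |Real.log ε|)
      (𝓝[>] 0) (𝓝 1) := by
  have hneg : Tendsto (fun ε => -Real.log ε) (𝓝[>] 0) atTop :=
    tendsto_neg_atBot_atTop.comp Real.tendsto_log_nhdsGT_zero
  have hratio : Tendsto (fun ε => ENNReal.ofReal (Real.log C / -Real.log ε + 1)) (𝓝[>] 0)
      (𝓝 1) := by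
    have := (ENNReal.continuous_ofReal.tendsto _).comp
      (((tendsto_const_nhds (x := Real.log C)).div_atTop hneg).add_const 1)
    rwa [zero_add, ENNReal.ofReal_one] at this
  refine hratio.congr' ?_
  filter_upwards [Ioo_mem_nhdsGT one_pos] with ε ⟨hε0, hε1⟩
  have hlog : 0 < -Real.log ε := neg_pos.2 (Real.log_neg hε0 hε1)
  rw [abs_of_neg (neg_pos.1 hlog), ← ENNReal.ofReal_div_of_pos hlog,
    Real.log_div hC.ne' hε0.ne']
  congr 1
  rw [sub_div, div_neg, div_neg, div_self (neg_pos.1 hlog).ne, sub_neg_eq_add]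

theorem mdim_le_one_of_dynS_le {C : ℝ} (hC : 0 < C)
    (h : ∀ᶠ ε in 𝓝[>] 0, dynS T ε ≤ ENNReal.ofReal (Real.log (C / ε))) : mdim T ≤ 1 :=
  (limsup_le_limsup (h.mono fun _ hε => ENNReal.div_le_div_right hε _)).trans
    (tendsto_ofReal_log_div_div_ofReal_abs_log hC).limsup_eq.le

theorem one_le_mdim_of_le_dynS {c : ℝ} (hc : 0 < c)
    (h : ∀ᶠ ε in 𝓝[>] 0, ENNReal.ofReal (Real.log (c / ε)) ≤ dynS T ε) : 1 ≤ mdim T :=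
  (tendsto_ofReal_log_div_div_ofReal_abs_log hc).limsup_eq.ge.trans
    (limsup_le_limsup (h.mono fun _ hε => ENNReal.div_le_div_right hε _))

end Dynamics

section WeightedSums

variable {η : ℝ} {K : ℕ}

theorem summable_half_pow_mul {f : ℕ → ℝ} (hf0 : ∀ n, 0 ≤ f n) (hf1 : ∀ n, f n ≤ 1) :
    Summable fun n => (1 / 2 : ℝ) ^ n * f n :=
  summable_geometric_two.of_nonneg_of_le (fun n => mul_nonneg (by positivity) (hf0 n))
    fun n => mul_le_of_le_one_right (by positivity) (hf1 n)

theorem tsum_half_pow_mul_le {f : ℕ → ℝ} (hη : 0 ≤ η) (hf0 : ∀ n, 0 ≤ f n)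
    (hf1 : ∀ n, f n ≤ 1) (hfK : ∀ n < K, f n ≤ η) :
    ∑' n, (1 / 2 : ℝ) ^ n * f n ≤ 2 * η + 2 * (1 / 2) ^ K := by
  have hs := summable_half_pow_mul hf0 hf1
  have head : ∑ n ∈ Finset.range K, (1 / 2 : ℝ) ^ n * f n ≤ 2 * η :=
    calc ∑ n ∈ Finset.range K, (1 / 2 : ℝ) ^ n * f n
        ≤ (∑ n ∈ Finset.range K, (1 / 2 : ℝ) ^ n) * η := by
          rw [Finset.sum_mul]
          exact Finset.sum_le_sum fun n hn =>
            mul_le_mul_of_nonneg_left (hfK n (Finset.mem_range.1 hn)) (by positivity)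
      _ ≤ 2 * η := mul_le_mul_of_nonneg_right (sum_geometric_two_le K) hη
  have tail : ∑' n, (1 / 2 : ℝ) ^ (n + K) * f (n + K) ≤ 2 * (1 / 2) ^ K :=
    calc ∑' n, (1 / 2 : ℝ) ^ (n + K) * f (n + K) ≤ ∑' n, (1 / 2 : ℝ) ^ n * (1 / 2) ^ K :=
          ((summable_nat_add_iff K).2 hs).tsum_le_tsum
            (fun n => by rw [← pow_add]; exact mul_le_of_le_one_right (by positivity) (hf1 _))
            (summable_geometric_two.mul_right _)
      _ = 2 * (1 / 2) ^ K := by rw [tsum_mul_right, tsum_geometric_two]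
  rw [← hs.sum_add_tsum_nat_add K]
  linarith

theorem two_zpow_neg_abs_natCast (n : ℕ) : (2 : ℝ) ^ (-|(n : ℤ)|) = (1 / 2) ^ n := by
  rw [Nat.abs_cast, zpow_neg, zpow_natCast, one_div, inv_pow]

theorem two_zpow_neg_abs_neg_natCast_add_one (n : ℕ) :
    (2 : ℝ) ^ (-|-((n : ℤ) + 1)|) = 1 / 2 * (1 / 2) ^ n := by
  rw [abs_neg, ← Nat.cast_add_one, two_zpow_neg_abs_natCast, pow_succ, mul_comm]

theorem summable_two_zpow_neg_abs_mul {f : ℤ → ℝ} (hf0 : ∀ k, 0 ≤ f k) (hf1 : ∀ k, f k ≤ 1) :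
    Summable fun k => (2 : ℝ) ^ (-|k|) * f k := by
  refine Summable.of_nat_of_neg_add_one ?_ ?_
  · simp_rw [two_zpow_neg_abs_natCast]
    exact summable_half_pow_mul (fun _ => hf0 _) fun _ => hf1 _
  · simp_rw [two_zpow_neg_abs_neg_natCast_add_one, mul_assoc]
    exact (summable_half_pow_mul (fun _ => hf0 _) fun _ => hf1 _).mul_left _

theorem tsum_two_zpow_neg_abs_mul_le {f : ℤ → ℝ} (hη : 0 ≤ η) (hf0 : ∀ k, 0 ≤ f k)
    (hf1 : ∀ k, f k ≤ 1) (hfK : ∀ k : ℤ, |k| ≤ K → f k ≤ η) :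
    ∑' k, (2 : ℝ) ^ (-|k|) * f k ≤ 4 * η + 4 * (1 / 2) ^ K := by
  have hpos := tsum_half_pow_mul_le (f := fun n : ℕ => f n) (K := K) hη (fun _ => hf0 _)
    (fun _ => hf1 _)
    fun n hn => hfK n (by rw [Nat.abs_cast]; exact_mod_cast hn.le)
  have hneg := tsum_half_pow_mul_le (f := fun n : ℕ => f (-(n + 1))) (K := K) hη (fun _ => hf0 _)
    (fun _ => hf1 _) fun n hn => hfK _ (by rw [abs_neg, abs_of_nonneg (by positivity)]; omega)
  rw [tsum_of_nat_of_neg_add_one (f := fun k => (2 : ℝ) ^ (-|k|) * f k) ?_ ?_]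
  all_goals simp only [two_zpow_neg_abs_natCast, two_zpow_neg_abs_neg_natCast_add_one, mul_assoc]
  · rw [tsum_mul_left]
    have : (0 : ℝ) ≤ (1 / 2) ^ K := by positivity
    linarith
  · exact summable_half_pow_mul (fun _ => hf0 _) fun _ => hf1 _
  · exact (summable_half_pow_mul (fun _ => hf0 _) fun _ => hf1 _).mul_left _

end WeightedSums

theorem dist_le_of_natFloor_div_eq {a b η : ℝ} (hη : 0 < η) (ha : 0 ≤ a) (hb : 0 ≤ b)
    (h : ⌊a / η⌋₊ = ⌊b / η⌋₊) : dist a b ≤ η := by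
  have hfloor : ⌊a / η⌋ = ⌊b / η⌋ := by
    rw [← Int.natCast_floor_eq_floor (by positivity),
      ← Int.natCast_floor_eq_floor (by positivity), h]
  have hlt := Int.abs_sub_lt_one_of_floor_eq_floor hfloor
  rw [← sub_div, abs_div, abs_of_pos hη, div_lt_one hη] at hlt
  exact hlt.le

theorem exists_pairwise_le_dist_unitInterval {δ : ℝ} (hδ : 0 < δ) :
    ∃ g : Fin (⌊1 / δ⌋₊ + 1) → unitInterval, Pairwise fun i j => δ ≤ dist (g i) (g j) := by
  refine ⟨fun i => ⟨i * δ, by positivity, (le_div_iff₀ hδ).1 <|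
    le_trans (by exact_mod_cast Nat.lt_succ_iff.1 i.2) (Nat.floor_le (by positivity))⟩, ?_⟩
  intro i j hij
  have hij' : (1 : ℝ) ≤ |(i : ℝ) - j| := by
    rcases Fin.lt_or_lt_of_ne hij with h | h
    · rw [abs_sub_comm, abs_of_pos (by simpa using h)]
      linarith [show ((i : ℕ) : ℝ) + 1 ≤ (j : ℕ) by exact_mod_cast h]
    · rw [abs_of_pos (by simpa using h)]
      linarith [show ((j : ℕ) : ℝ) + 1 ≤ (i : ℕ) by exact_mod_cast h]
  rw [Subtype.dist_eq, Real.dist_eq, ← sub_mul, abs_mul, abs_of_pos hδ]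
  nlinarith

def shift {α : Type*} (x : ℤ → α) : ℤ → α := fun k => x (k + 1)

theorem shift_iterate_apply {α : Type*} (j : ℕ) (x : ℤ → α) (k : ℤ) :
    shift^[j] x k = x (k + j) := by
  induction j generalizing x with
  | zero => simp
  | succ j ih =>
    rw [Function.iterate_succ_apply, ih, shift]
    push_cast
    ring_nf

section WeightedMetric

variable [MetricSpace (ℤ → unitInterval)]
  (hm : ∀ x y : ℤ → unitInterval, dist x y = ∑' k : ℤ, (2 : ℝ) ^ (-|k|) * dist (x k) (y k))
include hm

theorem dist_apply_zero_le (x y : ℤ → unitInterval) : dist (x 0) (y 0) ≤ dist x y := by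
  rw [hm]
  simpa using (summable_two_zpow_neg_abs_mul (fun k => dist_nonneg (x := x k) (y := y k))
    fun k => Real.dist_le_of_mem_Icc_01 (x k).2 (y k).2).le_tsum 0 fun _ _ => by positivity

theorem dist_le_of_forall_abs_le {x y : ℤ → unitInterval} {η : ℝ} {K : ℕ} (hη : 0 ≤ η)
    (h : ∀ k : ℤ, |k| ≤ K → dist (x k) (y k) ≤ η) :
    dist x y ≤ 4 * η + 4 * (1 / 2) ^ K := by
  rw [hm]
  exact tsum_two_zpow_neg_abs_mul_le hη (fun _ => dist_nonneg)
    (fun k => Real.dist_le_of_mem_Icc_01 (x k).2 (y k).2) h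

theorem dist_apply_le_dynDist_shift {n j : ℕ} (hj : j < n) (x y : ℤ → unitInterval) :
    dist (x j) (y j) ≤ dynDist shift n x y := by
  simpa [shift_iterate_apply] using
    (dist_apply_zero_le hm _ _).trans (dist_iterate_le_dynDist (T := shift) hj x y)

theorem dynDist_shift_le {x y : ℤ → unitInterval} {n K : ℕ} {η : ℝ} (hη : 0 ≤ η)
    (h : ∀ k ∈ Finset.Ico (-(K : ℤ)) (n + K), dist (x k) (y k) ≤ η) :
    dynDist shift n x y ≤ 4 * η + 4 * (1 / 2) ^ K :=
  dynDist_le (by positivity) fun j hj => dist_le_of_forall_abs_le hm hη fun k hk => by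
    rw [shift_iterate_apply, shift_iterate_apply]
    exact h _ (Finset.mem_Ico.2 (by constructor <;> cases abs_le.1 hk <;> omega))

theorem card_le_of_isDynSeparated_shift {n K : ℕ} {ε η : ℝ} (hη : 0 < η)
    (hε : 4 * η + 4 * (1 / 2) ^ K ≤ ε) {E : Finset (ℤ → unitInterval)}
    (hE : IsDynSeparated shift n ε E) : E.card ≤ (⌊1 / η⌋₊ + 1) ^ (n + 2 * K) := by
  let window := Finset.Ico (-(K : ℤ)) (n + K)
  let code (x : ℤ → unitInterval) (k : window) : Fin (⌊1 / η⌋₊ + 1) :=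
    ⟨⌊x k / η⌋₊, Nat.lt_succ_of_le (Nat.floor_le_floor (by gcongr; exact (x k).2.2))⟩
  have hcard := hE.card_le_of_dynDist_le code fun x y hxy =>
    (dynDist_shift_le hm hη.le fun k hk => dist_le_of_natFloor_div_eq hη (x k).2.1 (y k).2.1
      (congrArg Fin.val (congrFun hxy ⟨k, hk⟩))).trans hε
  have hwindow : window.card = n + 2 * K := by
    simp only [window, Int.card_Ico]
    omega
  simpa [hwindow] using hcard

theorem exists_forall_isDynSeparated_shift_card_le {ε : ℝ} (hε : 0 < ε) :
    ∃ K : ℕ, ∀ n (E : Finset (ℤ → unitInterval)), IsDynSeparated shift n ε E →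
      E.card ≤ (⌊8 / ε⌋₊ + 1) ^ (n + 2 * K) := by
  obtain ⟨K, hK⟩ :=
    exists_pow_lt_of_lt_one (by positivity : 0 < ε / 8) (by norm_num : (1 / 2 : ℝ) < 1)
  refine ⟨K, fun n E hE => ?_⟩
  simpa [one_div_div] using
    card_le_of_isDynSeparated_shift hm (η := ε / 8) (by positivity) (by linarith) hE

theorem exists_isDynSeparated_shift_card_eq {n : ℕ} {ε δ : ℝ} (hδ : 0 < δ) (hεδ : ε < δ) :
    ∃ E : Finset (ℤ → unitInterval), IsDynSeparated shift n ε E ∧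
      E.card = (⌊1 / δ⌋₊ + 1) ^ n := by
  obtain ⟨grid, grid_dist⟩ := exists_pairwise_le_dist_unitInterval hδ
  let point (v : Fin n → Fin (⌊1 / δ⌋₊ + 1)) (k : ℤ) : unitInterval :=
    if h : k.toNat < n then grid (v ⟨k.toNat, h⟩) else grid 0
  have point_apply (v) (j : Fin n) : point v j = grid (v j) := by simp [point]
  have point_sep {v w} (hvw : v ≠ w) : δ ≤ dynDist shift n (point v) (point w) := by
    obtain ⟨j, hj⟩ := Function.ne_iff.1 hvw
    calc δ ≤ dist (point v j) (point w j) := by rw [point_apply, point_apply]; exact grid_dist hj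
      _ ≤ dynDist shift n (point v) (point w) := dist_apply_le_dynDist_shift hm j.2 _ _
  have grid_inj : Function.Injective grid := fun i j hij =>
    by_contra fun hne => (grid_dist hne).not_gt (by rw [hij, dist_self]; exact hδ)
  have point_inj : Function.Injective point := fun v w hvw =>
    funext fun j => grid_inj (by rw [← point_apply, ← point_apply, hvw])
  refine ⟨Finset.univ.map ⟨point, point_inj⟩, ?_, by simp⟩
  rintro _ hx _ hy hne
  obtain ⟨v, -, rfl⟩ := Finset.mem_map.1 hx
  obtain ⟨w, -, rfl⟩ := Finset.mem_map.1 hy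
  exact hεδ.trans_le (point_sep fun h => hne (h ▸ rfl))

theorem dynS_shift_le {ε : ℝ} (hε : 0 < ε) (hε1 : ε ≤ 1) :
    dynS (shift (α := unitInterval)) ε ≤ ENNReal.ofReal (Real.log (9 / ε)) := by
  obtain ⟨K, hK⟩ := exists_forall_isDynSeparated_shift_card_le hm hε
  refine (dynS_le_ofReal_log fun n => dynSepNum_le (hK n)).trans
    (ENNReal.ofReal_le_ofReal (Real.log_le_log (by positivity) ?_))
  have hfloor : (⌊8 / ε⌋₊ : ℝ) ≤ 8 / ε := Nat.floor_le (by positivity)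
  have hone : (1 : ℝ) ≤ 1 / ε := by rw [le_div_iff₀ hε]; linarith
  push_cast
  linarith [show 8 / ε + 1 / ε = 9 / ε by ring]

theorem le_dynS_shift {ε : ℝ} (hε : 0 < ε) :
    ENNReal.ofReal (Real.log (1 / 2 / ε)) ≤ dynS (shift (α := unitInterval)) ε := by
  obtain ⟨K, hK⟩ := exists_forall_isDynSeparated_shift_card_le hm hε
  refine le_trans (ENNReal.ofReal_le_ofReal (Real.log_le_log (by positivity) ?_))
    (ofReal_log_le_dynS (M := ⌊1 / (2 * ε)⌋₊ + 1) fun n => ?_)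
  · rw [div_div]
    exact_mod_cast (Nat.lt_floor_add_one _).le
  · obtain ⟨E, hE, hcard⟩ :=
      exists_isDynSeparated_shift_card_eq hm (n := n) (by positivity : 0 < 2 * ε) (by linarith)
    exact hcard ▸ hE.card_le_dynSepNum (hK n)

end WeightedMetric

/-- The upper metric mean dimension of the shift on `[0,1]^ℤ`, for the metric
`d_T(x,y) = ∑_{k ∈ ℤ} 2^{-|k|} |x_k - y_k|`, equals `1`. -/
theorem mdim_shift_unitInterval
    [m : MetricSpace (ℤ → (Set.Icc (0:ℝ) 1))]
    (hm : ∀ x y : ℤ → (Set.Icc (0:ℝ) 1),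
      dist x y = ∑' k : ℤ, (2:ℝ) ^ (-|k|) * dist (x k) (y k)) :
    mdim (fun x : ℤ → (Set.Icc (0:ℝ) 1) => fun k => x (k + 1)) = 1 := by
  have upper : ∀ᶠ ε in 𝓝[>] 0,
      dynS (shift (α := unitInterval)) ε ≤ ENNReal.ofReal (Real.log (9 / ε)) := by
    filter_upwards [Ioc_mem_nhdsGT one_pos] with ε hε using dynS_shift_le hm hε.1 hε.2
  have lower : ∀ᶠ ε in 𝓝[>] 0,
      ENNReal.ofReal (Real.log (1 / 2 / ε)) ≤ dynS (shift (α := unitInterval)) ε := by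
    filter_upwards [self_mem_nhdsWithin] with ε hε using le_dynS_shift hm hε
  exact le_antisymm (mdim_le_one_of_dynS_le (by norm_num) upper)
    (one_le_mdim_of_le_dynS (by norm_num) lower)
end

section
/- Let (X,d) be a metric space, T:X→X a Borel measurable map, μ a Borel probability measure on X, n ≥ 1 and ε > 0. Suppose Z=(Z_0,…,Z_{n−1}):X→X^n is a measurable map with finite image satisfying ∫_X (1/n)∑_{k=0}^{n−1} d(T^k x, Z_k(x)) dμ(x) ≤ ε. Then there exists a measurable map Z'=(Z'_0,…,Z'_{n−1}):X→X^n with finite image such that Z'_k = T^k ∘ Z'_0 for all 0 ≤ k ≤ n−1, the preimage partitions of Z and Z' coincide, and ∫_X (1/n)∑_{k=0}^{n−1} d(T^k x, Z'_k(x)) dμ(x) ≤ 2ε. -/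
open Filter Set Metric Function
open scoped ENNReal NNReal

/-! Inside each cell `Z ⁻¹' {v}` pick a point `y v` whose distortion
`meanDist (orbit T n (y v)) v` is at most the average over the cell of the distortion
`meanDist (orbit T n x) (Z x)` of `Z`, and put `Z₀ x = y (Z x)`. Since `Z (y v) = v`, the triangle
inequality bounds the distortion of `Z₀` at `x` by that of `Z` at `x` plus that of `Z` at `Z₀ x`,
and by the choice of `y` the last term integrates to at most the integral of the first. -/

section OrbitApproximation

open MeasureTheory

variable {α β : Type*} [MeasurableSpace α] [MeasurableSpace β] [MeasurableSingletonClass β]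

theorem Measurable.apply_of_countable_range {γ : Type*} [MeasurableSpace γ] {f : α → β}
    (hf : Measurable f) (hc : (range f).Countable) {G : α → β → γ}
    (hG : ∀ b, Measurable (G · b)) : Measurable fun x => G x (f x) := by
  have := hc.to_subtype
  have hG' : Measurable fun p : α × range f => G p.1 p.2 :=
    measurable_from_prod_countable_left fun b => hG b
  exact hG'.comp (measurable_id.prodMk (hf.subtype_mk (h := mem_range_self)))

theorem integrable_comp_of_finite_range {μ : Measure α} [IsFiniteMeasure μ] {f : α → β}
    (hf : Measurable f) (hfin : (range f).Finite) (φ : β → ℝ) :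
    Integrable (fun x => φ (f x)) μ := by
  obtain ⟨C, hC⟩ := (hfin.image fun b => ‖φ b‖).bddAbove
  have hφf : Measurable fun x => φ (f x) :=
    hf.apply_of_countable_range hfin.countable (G := fun _ b => φ b) fun _ => measurable_const
  exact .of_bound hφf.aestronglyMeasurable C (ae_of_all _ fun x => hC ⟨f x, mem_range_self x, rfl⟩)

theorem integral_eq_sum_setIntegral_fiber {E : Type*} [NormedAddCommGroup E] [NormedSpace ℝ E]
    {μ : Measure α} {f : α → β} (hf : Measurable f) (hfin : (range f).Finite) {g : α → E}
    (hg : Integrable g μ) :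
    ∫ x, g x ∂μ = ∑ b ∈ hfin.toFinset, ∫ x in f ⁻¹' {b}, g x ∂μ := by
  rw [← integral_biUnion_finset _ (fun b _ => hf (measurableSet_singleton b))
    ((pairwiseDisjoint_fiber f _).subset (subset_univ _)) fun b _ => hg.integrableOn,
    ← Finset.set_biUnion_coe, hfin.coe_toFinset, biUnion_preimage_singleton, preimage_range,
    setIntegral_univ]

theorem exists_mem_measureReal_mul_le_setIntegral {μ : Measure α} {s : Set α} (hμs : μ s ≠ ∞)
    (hs : s.Nonempty) {g : α → ℝ} (hg : IntegrableOn g s μ) :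
    ∃ y ∈ s, μ.real s * g y ≤ ∫ x in s, g x ∂μ := by
  by_cases h0 : μ s = 0
  · obtain ⟨y, hy⟩ := hs
    exact ⟨y, hy, by simp [measureReal_def, h0, setIntegral_measure_zero]⟩
  · obtain ⟨y, hy, hle⟩ := exists_le_setAverage h0 hμs hg
    refine ⟨y, hy, ?_⟩
    have hpos : 0 < μ.real s := measureReal_nonneg.lt_of_ne' ((measureReal_ne_zero_iff hμs).2 h0)
    rwa [setAverage_eq, smul_eq_mul, le_inv_mul_iff₀ hpos] at hle

theorem exists_section_integral_comp_le [Nonempty α] {μ : Measure α} [IsFiniteMeasure μ]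
    {f : α → β} (hf : Measurable f) (hfin : (range f).Finite) (g : α → ℝ) :
    ∃ s : β → α, (∀ x, f (s (f x)) = f x) ∧
      (Integrable g μ → ∫ x, g (s (f x)) ∂μ ≤ ∫ x, g x ∂μ) := by
  have hsel : ∀ b ∈ range f, ∃ y ∈ f ⁻¹' {b},
      Integrable g μ → μ.real (f ⁻¹' {b}) * g y ≤ ∫ x in f ⁻¹' {b}, g x ∂μ := by
    rintro _ ⟨x, rfl⟩
    by_cases hg : Integrable g μ
    · obtain ⟨y, hy, hle⟩ :=
        exists_mem_measureReal_mul_le_setIntegral (s := f ⁻¹' {f x}) (measure_ne_top μ _) ⟨x, rfl⟩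
          hg.integrableOn
      exact ⟨y, hy, fun _ => hle⟩
    · exact ⟨x, rfl, fun hg' => absurd hg' hg⟩
  choose! s hsf hsg using hsel
  refine ⟨s, fun x => hsf _ (mem_range_self x), fun hg => ?_⟩
  rw [integral_eq_sum_setIntegral_fiber hf hfin hg, integral_eq_sum_setIntegral_fiber hf hfin
    (integrable_comp_of_finite_range hf hfin fun b => g (s b))]
  refine Finset.sum_le_sum fun b hb => ?_
  rw [setIntegral_congr_fun (hf (measurableSet_singleton b))
      (g := fun _ => g (s b)) fun x hx => congrArg (fun b => g (s b)) hx,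
    setIntegral_const, smul_eq_mul]
  exact hsg b (hfin.mem_toFinset.1 hb) hg

/-- `hhg` is only asked of an integrable `g`: otherwise `∫ g = 0` is a junk value, and then `f` is
not integrable either. -/
theorem integral_le_two_mul_integral_of_abs_sub_le {μ : Measure α} {f g h : α → ℝ}
    (hf : AEStronglyMeasurable f μ) (hg : AEStronglyMeasurable g μ) (hh : Integrable h μ)
    (hfg : ∀ᵐ x ∂μ, |f x - g x| ≤ h x) (hhg : Integrable g μ → ∫ x, h x ∂μ ≤ ∫ x, g x ∂μ) :
    ∫ x, f x ∂μ ≤ 2 * ∫ x, g x ∂μ := by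
  have hdiff : Integrable (f - g) μ :=
    hh.mono' (hf.sub hg) (hfg.mono fun x hx => by simpa [Real.norm_eq_abs] using hx)
  by_cases hgi : Integrable g μ
  · calc ∫ x, f x ∂μ = ∫ x, g x ∂μ + ∫ x, (f - g) x ∂μ := by
          rw [← integral_add hgi hdiff]; simp
      _ ≤ ∫ x, g x ∂μ + ∫ x, h x ∂μ := add_le_add le_rfl <|
          integral_mono_ae hdiff hh (hfg.mono fun x hx => (le_abs_self _).trans hx)
      _ ≤ 2 * ∫ x, g x ∂μ := by linarith [hhg hgi]
  · have hfi : ¬ Integrable f μ := fun hfi => hgi (by simpa using hfi.sub hdiff)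
    simp [integral_undef hfi, integral_undef hgi]

variable {X : Type*} [PseudoMetricSpace X]

/-- `meanDist (orbit T n x) v` is the distortion `(1/n) ∑_{k<n} d(T^k x, v_k)` of the statement. -/
def orbit (T : X → X) (n : ℕ) (x : X) : Fin n → X := fun k => T^[k] x

noncomputable def meanDist {n : ℕ} (u v : Fin n → X) : ℝ := (∑ k, dist (u k) (v k)) / n

theorem abs_meanDist_sub_meanDist_le {n : ℕ} (u v w : Fin n → X) :
    |meanDist u w - meanDist u v| ≤ meanDist w v := by
  unfold meanDist
  rw [← sub_div, abs_div, Nat.abs_cast, ← Finset.sum_sub_distrib]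
  gcongr
  refine (Finset.abs_sum_le_sum_abs _ _).trans (Finset.sum_le_sum fun k _ => ?_)
  simpa only [dist_comm (u k)] using abs_dist_sub_le (w k) (v k) (u k)

theorem measurable_meanDist_orbit [MeasurableSpace X] [OpensMeasurableSpace X] {T : X → X}
    (hT : Measurable T) {n : ℕ} (v : Fin n → X) :
    Measurable fun x => meanDist (orbit T n x) v := by
  unfold meanDist orbit
  have hdist (k : ℕ) (c : X) : Measurable fun x => dist (T^[k] x) c :=
    (continuous_id.dist continuous_const).measurable.comp (hT.iterate k)
  exact .div_const (Finset.measurable_sum _ fun (k : Fin n) _ => hdist k (v k)) _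

end OrbitApproximation

theorem exists_orbit_approximation_general
    {X : Type u} [MetricSpace X] [MeasurableSpace X] [BorelSpace X]
    (T : X → X) (hT : Measurable T)
    (μ : MeasureTheory.Measure X) (hprob : MeasureTheory.IsProbabilityMeasure μ)
    (n : ℕ) (ε : ℝ)
    (Z : X → Fin n → X) (hZmeas : Measurable Z) (hZfin : (Set.range Z).Finite)
    (hZint : ∫ x, (∑ k : Fin n, dist (T^[(k : ℕ)] x) (Z x k)) / n ∂μ ≤ ε) :
    ∃ Z₀ : X → X, Measurable Z₀ ∧ (Set.range Z₀).Finite ∧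
      (∀ x y : X, Z x = Z y ↔ Z₀ x = Z₀ y) ∧
      ∫ x, (∑ k : Fin n, dist (T^[(k : ℕ)] x) (T^[(k : ℕ)] (Z₀ x))) / n ∂μ ≤ 2 * ε := by
  have := MeasureTheory.nonempty_of_isProbabilityMeasure μ
  set g : X → ℝ := fun x => meanDist (orbit T n x) (Z x)
  obtain ⟨s, hs, hsg⟩ := exists_section_integral_comp_le hZmeas hZfin g (μ := μ)
  refine ⟨s ∘ Z, hZmeas.apply_of_countable_range hZfin.countable fun _ => measurable_const,
    range_comp s Z ▸ hZfin.image s,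
    fun x y => ⟨congrArg s, fun h => by rw [← hs x, ← hs y]; exact congrArg Z h⟩, ?_⟩
  have hdist : ∀ x, |meanDist (orbit T n x) (orbit T n (s (Z x))) - g x| ≤ g (s (Z x)) :=
    fun x => by simpa only [g, hs x] using abs_meanDist_sub_meanDist_le _ (Z x) _
  have hbound := integral_le_two_mul_integral_of_abs_sub_le
    (hZmeas.apply_of_countable_range hZfin.countable
      fun v => measurable_meanDist_orbit hT (orbit T n (s v))).aestronglyMeasurable
    (hZmeas.apply_of_countable_range hZfin.countable
      fun v => measurable_meanDist_orbit hT v).aestronglyMeasurable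
    (integrable_comp_of_finite_range hZmeas hZfin (g ∘ s)) (.of_forall hdist) hsg
  exact hbound.trans (by gcongr; exact hZint)

/-- **Lemma 4.4**: any `(n,ε)`-approximation `Z` of `(X,T)` can be replaced by an
`(n,2ε)`-approximation `Z'` of the form `Z'_k = T^k ∘ Z'_0`, with the same preimage
partition. -/
theorem exists_orbit_approximation
    {X : Type u} [MetricSpace X] [MeasurableSpace X] [BorelSpace X]
    (T : X → X) (hT : Measurable T)
    (μ : MeasureTheory.Measure X) (hprob : MeasureTheory.IsProbabilityMeasure μ)
    (n : ℕ) (hn : 1 ≤ n) (ε : ℝ) (hε : 0 < ε)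
    (Z : X → Fin n → X) (hZmeas : Measurable Z) (hZfin : (Set.range Z).Finite)
    (hZint : ∫ x, (∑ k : Fin n, dist (T^[(k : ℕ)] x) (Z x k)) / n ∂μ ≤ ε) :
    ∃ Z₀ : X → X, Measurable Z₀ ∧ (Set.range Z₀).Finite ∧
      (∀ x y : X, Z x = Z y ↔ Z₀ x = Z₀ y) ∧
      ∫ x, (∑ k : Fin n, dist (T^[(k : ℕ)] x) (T^[(k : ℕ)] (Z₀ x))) / n ∂μ ≤ 2 * ε :=
  exists_orbit_approximation_general T hT μ hprob n ε Z hZmeas hZfin hZint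
end

section
/- Let I be a nonempty index set and for each i ∈ I let f_i : (0,∞) → ℝ be a convex and antitone (decreasing) function. Define F(R) = sup_{i∈I} f_i(R) and assume F(R) is finite for every R > 0 and that inf_{R>0} F(R) ≤ 0. Then for every ε > 0 that lies in the image of F, one has inf{ R > 0 : F(R) ≤ ε } = sup_{i∈I} inf{ R > 0 : f_i(R) ≤ ε }. -/
open Filter Set Metric Function
open scoped ENNReal NNReal

/-!
For an antitone function the set `{R > 0 | f R ≤ ε}` is a ray going off to `+∞`, whose left
endpoint is the generalized inverse of `f` at `ε`. Since `F ≤ ε` exactly where every `f i ≤ ε`,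
the ray of `F` is the intersection of the rays of the `f i`, so its endpoint is the supremum of
their endpoints.
-/

noncomputable section

def genInv (f : ℝ → ℝ) (ε : ℝ) : ℝ :=
  sInf {R : ℝ | 0 < R ∧ f R ≤ ε}

variable {f g : ℝ → ℝ} {ε : ℝ}

lemma genInv_nonneg : 0 ≤ genInv f ε :=
  Real.sInf_nonneg fun _ hR => hR.1.le

lemma genInv_le {R : ℝ} (hR : 0 < R) (hfR : f R ≤ ε) : genInv f ε ≤ R :=
  csInf_le ⟨0, fun _ hR' => hR'.1.le⟩ ⟨hR, hfR⟩

lemma genInv_le_genInv (hfg : ∀ R, 0 < R → f R ≤ g R) (hg : ∃ R, 0 < R ∧ g R ≤ ε) :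
    genInv f ε ≤ genInv g ε :=
  csInf_le_csInf ⟨0, fun _ hR => hR.1.le⟩ hg fun R hR => ⟨hR.1, (hfg R hR.1).trans hR.2⟩

lemma AntitoneOn.le_of_genInv_lt (hf : AntitoneOn f (Ioi 0)) (hne : ∃ R, 0 < R ∧ f R ≤ ε)
    {R : ℝ} (hR : genInv f ε < R) : f R ≤ ε := by
  obtain ⟨R', ⟨hR'pos, hfR'⟩, hR'R⟩ := exists_lt_of_csInf_lt hne hR
  exact (hf hR'pos (hR'pos.trans hR'R) hR'R.le).trans hfR'

theorem genInv_eq_iSup_genInv {ι : Type*} {f : ι → ℝ → ℝ} {F : ℝ → ℝ}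
    (hanti : ∀ i, AntitoneOn (f i) (Ioi 0))
    (hF : ∀ R, 0 < R → F R = ⨆ i, f i R)
    (hbdd : ∀ R, 0 < R → BddAbove (range fun i => f i R))
    (hε : 0 ≤ ε) (hne : ∃ R, 0 < R ∧ F R ≤ ε) :
    genInv F ε = ⨆ i, genInv (f i) ε := by
  have hfF : ∀ i R, 0 < R → f i R ≤ F R := fun i R hR =>
    (hF R hR).symm ▸ le_ciSup (hbdd R hR) i
  have hle : ∀ i, genInv (f i) ε ≤ genInv F ε := fun i => genInv_le_genInv (hfF i) hne
  have hneᵢ : ∀ i, ∃ R, 0 < R ∧ f i R ≤ ε := fun i =>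
    hne.imp fun R hR => ⟨hR.1, (hfF i R hR.1).trans hR.2⟩
  refine le_antisymm (le_of_forall_gt_imp_ge_of_dense fun R hR => ?_)
    (Real.iSup_le hle genInv_nonneg)
  have hRpos : 0 < R := (Real.iSup_nonneg fun _ => genInv_nonneg).trans_lt hR
  refine genInv_le hRpos ((hF R hRpos).symm ▸ Real.iSup_le (fun i => ?_) hε)
  have hbddInv : BddAbove (range fun i => genInv (f i) ε) :=
    ⟨genInv F ε, forall_mem_range.2 hle⟩
  exact (hanti i).le_of_genInv_lt (hneᵢ i) ((le_ciSup hbddInv i).trans_lt hR)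

end

theorem sInf_le_sup_eq_sSup_sInf_general
    {ι : Type u} (f : ι → ℝ → ℝ)
    (hanti : ∀ i, AntitoneOn (f i) (Set.Ioi 0))
    (F : ℝ → ℝ)
    (hF : ∀ R : ℝ, 0 < R → F R = ⨆ i, f i R)
    (hbdd : ∀ R : ℝ, 0 < R → BddAbove (Set.range fun i => f i R))
    (ε : ℝ) (hε : 0 < ε) (hεim : ε ∈ F '' Set.Ioi 0) :
    sInf {R : ℝ | 0 < R ∧ F R ≤ ε} = ⨆ i, sInf {R : ℝ | 0 < R ∧ f i R ≤ ε} := by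
  obtain ⟨R₀, hR₀, hFR₀⟩ := hεim
  exact genInv_eq_iSup_genInv hanti hF hbdd hε.le ⟨R₀, hR₀, hFR₀.le⟩

/-- **Lemma 4.10**: for a family of convex decreasing functions `f_i : (0,∞) → ℝ` whose
pointwise supremum `F` is finite and has infimum at most `0`, the generalized inverse of `F`
at any level `ε` in the image of `F` is the supremum of the generalized inverses of the
`f_i`. -/
theorem sInf_le_sup_eq_sSup_sInf
    {ι : Type u} [Nonempty ι] (f : ι → ℝ → ℝ)
    (hconv : ∀ i, ConvexOn ℝ (Set.Ioi 0) (f i))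
    (hanti : ∀ i, AntitoneOn (f i) (Set.Ioi 0))
    (F : ℝ → ℝ)
    (hF : ∀ R : ℝ, 0 < R → F R = ⨆ i, f i R)
    (hbdd : ∀ R : ℝ, 0 < R → BddAbove (Set.range fun i => f i R))
    (hinf : sInf (F '' Set.Ioi 0) ≤ 0)
    (ε : ℝ) (hε : 0 < ε) (hεim : ε ∈ F '' Set.Ioi 0) :
    sInf {R : ℝ | 0 < R ∧ F R ≤ ε} = ⨆ i, sInf {R : ℝ | 0 < R ∧ f i R ≤ ε} :=
  sInf_le_sup_eq_sSup_sInf_general f hanti F hF hbdd ε hε hεim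
end

section
/- There exists a continuous map f:[0,1]→[0,1] such that, with d the Euclidean metric on [0,1], the upper metric mean dimension satisfies mdim([0,1],d,f) = 1. -/
open Filter Set Metric Function
open scoped ENNReal NNReal

/-! On the block `[2^-(m+1), 2^-m]` the map is an affine copy of a sawtooth with
`2 * 2^(m(m+3)) + 1` full branches. The ends of the blocks are fixed points and the blocks shrink
to `0`, so the map is continuous. Itineraries through the increasing branches of the `m`-th
block give `2^(m(m+3)n)` points that are `(n, ε_m)`-separated for `ε_m = 2^-((m+1)(m+3))`,
hence `S(ε_m) / |log ε_m| ≥ m / (m+1)`. Conversely, recording the cell of the grid `εℕ` that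
each of the first `n` iterates visits shows that every map of `[0,1]` has at most
`(⌊1/ε⌋ + 1)^n` points that are `(n, ε)`-separated, so `mdim ≤ 1`. -/

namespace MdimExample

open Real Topology

noncomputable section

section Dynamics

variable {X : Type*} [MetricSpace X] (g : X → X)

def IsDynSeparated (n : ℕ) (ε : ℝ) (E : Finset X) : Prop :=
  ∀ x ∈ E, ∀ y ∈ E, x ≠ y → ε < dynDist g n x y

theorem dist_iterate_le_dynDist {n j : ℕ} (hj : j < n) (x y : X) :
    dist (g^[j] x) (g^[j] y) ≤ dynDist g n x y := by
  rw [dynDist, dist_nndist, NNReal.coe_le_coe]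
  exact Finset.le_sup (f := fun k => nndist (g^[k] x) (g^[k] y)) (Finset.mem_range.2 hj)

theorem dynDist_lt_of_forall_dist_lt {n : ℕ} {ε : ℝ} (hε : 0 < ε) {x y : X}
    (h : ∀ j < n, dist (g^[j] x) (g^[j] y) < ε) : dynDist g n x y < ε := by
  lift ε to ℝ≥0 using hε.le
  rw [dynDist, NNReal.coe_lt_coe, Finset.sup_lt_iff (by exact_mod_cast hε)]
  intro j hj
  exact_mod_cast h j (Finset.mem_range.1 hj)

theorem card_le_dynSepNum {n : ℕ} {ε : ℝ} {M : ℕ}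
    (hM : ∀ E : Finset X, IsDynSeparated g n ε E → E.card ≤ M)
    {E : Finset X} (hE : IsDynSeparated g n ε E) :
    E.card ≤ dynSepNum g n ε :=
  le_csSup ⟨M, by rintro _ ⟨E', hE', rfl⟩; exact hM E' hE'⟩ ⟨E, hE, rfl⟩

theorem dynSepNum_le {n : ℕ} {ε : ℝ} {M : ℕ}
    (hM : ∀ E : Finset X, IsDynSeparated g n ε E → E.card ≤ M) :
    dynSepNum g n ε ≤ M :=
  csSup_le' (by rintro _ ⟨E, hE, rfl⟩; exact hM E hE)

end Dynamics

theorem ofReal_log_pow_div (M : ℕ) {n : ℕ} (hn : n ≠ 0) :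
    ENNReal.ofReal (log ((M ^ n : ℕ) : ℝ)) / n = ENNReal.ofReal (log M) := by
  rw [Nat.cast_pow, Real.log_pow, ENNReal.ofReal_mul n.cast_nonneg, ENNReal.ofReal_natCast,
    mul_comm, ENNReal.mul_div_cancel_right (by exact_mod_cast hn) (ENNReal.natCast_ne_top n)]

theorem monotone_log_natCast : Monotone fun n : ℕ => log n := by
  intro u v h
  rcases u.eq_zero_or_pos with rfl | hu
  · simpa using log_natCast_nonneg v
  · exact log_le_log (by exact_mod_cast hu) (by exact_mod_cast h)

theorem limsup_ofReal_log_div_le {u : ℕ → ℕ} {M : ℕ} (h : ∀ n, u n ≤ M ^ n) :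
    atTop.limsup (fun n : ℕ => ENNReal.ofReal (log (u n)) / n) ≤ ENNReal.ofReal (log M) := by
  refine limsup_le_of_le (by isBoundedDefault) ?_
  filter_upwards [eventually_ne_atTop 0] with n hn
  rw [← ofReal_log_pow_div M hn]
  exact ENNReal.div_le_div_right (ENNReal.ofReal_le_ofReal (monotone_log_natCast (h n))) _

theorem ofReal_log_le_limsup_ofReal_log_div {u : ℕ → ℕ} {M : ℕ} (h : ∀ n, M ^ n ≤ u n) :
    ENNReal.ofReal (log M) ≤ atTop.limsup (fun n : ℕ => ENNReal.ofReal (log (u n)) / n) := by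
  refine le_limsup_of_frequently_le' (Eventually.frequently ?_)
  filter_upwards [eventually_ne_atTop 0] with n hn
  rw [← ofReal_log_pow_div M hn]
  exact ENNReal.div_le_div_right (ENNReal.ofReal_le_ofReal (monotone_log_natCast (h n))) _

section UnitInterval

variable (g : Icc (0 : ℝ) 1 → Icc (0 : ℝ) 1)

theorem card_le_of_dynSeparated {n : ℕ} {ε : ℝ} (hε : 0 < ε) {E : Finset (Icc (0 : ℝ) 1)}
    (hE : IsDynSeparated g n ε E) : E.card ≤ (⌊ε⁻¹⌋₊ + 1) ^ n := by
  let cell (x : Icc (0 : ℝ) 1) (j : Fin n) : Fin (⌊ε⁻¹⌋₊ + 1) :=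
    ⟨⌊(g^[j] x : ℝ) / ε⌋₊, Nat.lt_succ_of_le <| Nat.floor_le_floor <|
      div_le_div_of_nonneg_right (g^[j] x).2.2 hε.le |>.trans_eq (one_div ε)⟩
  have hinj : Set.InjOn cell E := by
    intro x hx y hy hxy
    by_contra hne
    refine (hE x hx y hy hne).not_gt (dynDist_lt_of_forall_dist_lt g hε fun j hj => ?_)
    have hfloor := congrArg Fin.val (congrFun hxy ⟨j, hj⟩)
    simp only [cell, ← Int.natCast_inj, Int.natCast_floor_eq_floor
      (div_nonneg (g^[j] x).2.1 hε.le), Int.natCast_floor_eq_floor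
      (div_nonneg (g^[j] y).2.1 hε.le)] at hfloor
    have := Int.abs_sub_lt_one_of_floor_eq_floor hfloor
    rwa [← sub_div, abs_div, abs_of_pos hε, div_lt_one hε, ← Real.dist_eq] at this
  simpa using Finset.card_le_card_of_injOn cell (fun _ _ => Finset.mem_univ _) hinj

theorem dynS_le_log_floor_inv_add_one {ε : ℝ} (hε : 0 < ε) :
    dynS g ε ≤ ENNReal.ofReal (log ((⌊ε⁻¹⌋₊ + 1 : ℕ) : ℝ)) :=
  limsup_ofReal_log_div_le fun _ => dynSepNum_le g fun _ hE => card_le_of_dynSeparated g hε hE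

theorem dynS_div_abs_log_le {ε : ℝ} (hε0 : 0 < ε) (hε1 : ε < 1) :
    dynS g ε / ENNReal.ofReal |log ε| ≤ ENNReal.ofReal (log 2 / |log ε| + 1) := by
  have hlog : 0 < |log ε| := abs_pos.2 (log_neg hε0 hε1).ne
  have hcount : ((⌊ε⁻¹⌋₊ + 1 : ℕ) : ℝ) ≤ 2 / ε := by
    have h1 : 1 ≤ ε⁻¹ := one_le_inv₀ hε0 |>.2 hε1.le
    push_cast
    linarith [Nat.floor_le (inv_nonneg.2 hε0.le), show 2 / ε = ε⁻¹ + ε⁻¹ by ring]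
  have hlog2 : log (2 / ε) = log 2 + |log ε| := by
    rw [log_div two_ne_zero hε0.ne', abs_of_neg (log_neg hε0 hε1), sub_eq_add_neg]
  calc dynS g ε / ENNReal.ofReal |log ε|
      ≤ ENNReal.ofReal (log 2 + |log ε|) / ENNReal.ofReal |log ε| := by
        refine ENNReal.div_le_div_right ((dynS_le_log_floor_inv_add_one g hε0).trans ?_) _
        exact ENNReal.ofReal_le_ofReal (hlog2 ▸ log_le_log (by positivity) hcount)
    _ = ENNReal.ofReal (log 2 / |log ε| + 1) := by
        rw [← ENNReal.ofReal_div_of_pos hlog, add_div, div_self hlog.ne']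

theorem tendsto_ofReal_log_two_div_abs_log_add_one :
    Tendsto (fun ε : ℝ => ENNReal.ofReal (log 2 / |log ε| + 1)) (𝓝[>] 0) (𝓝 1) := by
  have h := (tendsto_abs_atBot_atTop.comp tendsto_log_nhdsGT_zero).const_div_atTop (log 2)
  simpa using ENNReal.tendsto_ofReal (h.add_const 1)

theorem mdim_le_one : mdim g ≤ 1 := by
  refine (limsup_le_limsup ?_).trans tendsto_ofReal_log_two_div_abs_log_add_one.limsup_eq.le
  filter_upwards [Ioo_mem_nhdsGT (zero_lt_one' ℝ)] with ε hε
  exact dynS_div_abs_log_le g hε.1 hε.2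

end UnitInterval

/-- `arccos ∘ cos` folds `ℝ` onto `[0, π]`, so this is the distance from `t` to `2ℤ`. -/
def triangleWave (t : ℝ) : ℝ := arccos (cos (π * t)) / π

@[fun_prop]
theorem continuous_triangleWave : Continuous triangleWave := by
  unfold triangleWave; fun_prop

theorem triangleWave_mem_Icc (t : ℝ) : triangleWave t ∈ Icc (0 : ℝ) 1 :=
  ⟨div_nonneg (arccos_nonneg _) pi_pos.le, div_le_one_of_le₀ (arccos_le_pi _) pi_pos.le⟩

theorem triangleWave_two_mul_add {y : ℝ} (i : ℤ) (hy : y ∈ Icc (0 : ℝ) 1) :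
    triangleWave (2 * i + y) = y := by
  have hπy : π * (2 * i + y) = π * y + i * (2 * π) := by ring
  rw [triangleWave, hπy, cos_add_int_mul_two_pi,
    arccos_cos (by nlinarith [pi_pos, hy.1]) (by nlinarith [pi_pos, hy.2]),
    mul_div_cancel_left₀ _ pi_pos.ne']

theorem triangleWave_zero : triangleWave 0 = 0 := by
  simpa using triangleWave_two_mul_add 0 (left_mem_Icc.2 zero_le_one)

def sawtooth (k : ℕ) (y : ℝ) : ℝ := triangleWave (k * y)

theorem sawtooth_zero (k : ℕ) : sawtooth k 0 = 0 := by simp [sawtooth, triangleWave_zero]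

theorem sawtooth_one_of_odd {k : ℕ} (hk : Odd k) : sawtooth k 1 = 1 := by
  obtain ⟨r, rfl⟩ := hk
  simpa [sawtooth] using triangleWave_two_mul_add r (right_mem_Icc.2 zero_le_one)

/-- The point of `[0,1]` whose `sawtooth k`-itinerary through the increasing branches
`[2c/k, (2c+1)/k]` is `s`, followed by the fixed point `0`. -/
def sawtoothCode (k : ℕ) : List ℕ → ℝ
  | [] => 0
  | c :: s => (2 * c + sawtoothCode k s) / k

section SawtoothCode

variable {k : ℕ}

theorem sawtoothCode_mem_Icc {s : List ℕ} (hs : ∀ c ∈ s, 2 * c + 1 ≤ k) :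
    sawtoothCode k s ∈ Icc (0 : ℝ) 1 := by
  induction s with
  | nil => exact left_mem_Icc.2 zero_le_one
  | cons c s ih =>
    have hc : (2 * c + 1 : ℝ) ≤ k := by exact_mod_cast hs c (by simp)
    obtain ⟨h0, h1⟩ := ih fun c' hc' => hs c' (by simp [hc'])
    have hc0 : (0 : ℝ) ≤ c := c.cast_nonneg
    rw [sawtoothCode]
    exact ⟨div_nonneg (by linarith) k.cast_nonneg,
      div_le_one_of_le₀ (by linarith) k.cast_nonneg⟩

theorem sawtooth_sawtoothCode {s : List ℕ} (hs : ∀ c ∈ s, 2 * c + 1 ≤ k) :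
    sawtooth k (sawtoothCode k s) = sawtoothCode k s.tail := by
  cases s with
  | nil => exact sawtooth_zero k
  | cons c s =>
    have hk : (k : ℝ) ≠ 0 := Nat.cast_ne_zero.2 (by have := hs c (by simp); omega)
    rw [sawtooth, sawtoothCode, mul_div_cancel₀ _ hk, List.tail_cons]
    exact_mod_cast triangleWave_two_mul_add c
      (sawtoothCode_mem_Icc fun c' hc' => hs c' (by simp [hc']))

theorem inv_le_abs_sub_sawtoothCode {c c' : ℕ} {s s' : List ℕ} (hcc' : c ≠ c')
    (hs : ∀ d ∈ c :: s, 2 * d + 1 ≤ k) (hs' : ∀ d ∈ c' :: s', 2 * d + 1 ≤ k) :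
    (k : ℝ)⁻¹ ≤ |sawtoothCode k (c :: s) - sawtoothCode k (c' :: s')| := by
  have hk : (0 : ℝ) < k := Nat.cast_pos.2 (by have := hs c (by simp); omega)
  obtain ⟨h0, h1⟩ := sawtoothCode_mem_Icc (k := k) (s := s) fun d hd => hs d (by simp [hd])
  obtain ⟨h0', h1'⟩ := sawtoothCode_mem_Icc (k := k) (s := s') fun d hd => hs' d (by simp [hd])
  rw [sawtoothCode, sawtoothCode, div_sub_div_same, abs_div, abs_of_pos hk, inv_eq_one_div,
    div_le_div_iff_of_pos_right hk]
  rcases hcc'.lt_or_gt with h | h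
  · have : (c : ℝ) + 1 ≤ c' := by exact_mod_cast h
    exact le_abs'.2 (Or.inl (by linarith))
  · have : (c' : ℝ) + 1 ≤ c := by exact_mod_cast h
    exact le_abs'.2 (Or.inr (by linarith))

end SawtoothCode

/-- The `m`-th block is `[blockStart m, 2 * blockStart m]`; the blocks tile `(0, 1]`. -/
def blockStart (m : ℕ) : ℝ := (1 / 2) ^ (m + 1)

theorem blockStart_pos (m : ℕ) : 0 < blockStart m := by unfold blockStart; positivity

theorem two_mul_blockStart (m : ℕ) : 2 * blockStart m = (1 / 2) ^ m := by
  rw [blockStart, pow_succ]; ring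

theorem two_mul_blockStart_le_one (m : ℕ) : 2 * blockStart m ≤ 1 := by
  rw [two_mul_blockStart]; exact pow_le_one₀ (by norm_num) (by norm_num)

theorem two_mul_blockStart_le_of_lt {m m' : ℕ} (h : m' < m) :
    2 * blockStart m ≤ blockStart m' := by
  rw [two_mul_blockStart, blockStart]; exact pow_le_pow_of_le_one (by norm_num) (by norm_num) h

theorem exists_mem_block {x : ℝ} (hx0 : 0 < x) (hx1 : x ≤ 1) :
    ∃ m, x ∈ Icc (blockStart m) (2 * blockStart m) := by
  obtain ⟨m, hlt, hle⟩ :=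
    exists_nat_pow_near_of_lt_one hx0 hx1 (by norm_num : (0 : ℝ) < 1 / 2) (by norm_num)
  exact ⟨m, hlt.le, (two_mul_blockStart m).symm ▸ hle⟩

/-- The letters `c < 2 ^ (m * (m + 3))` index increasing branches of `sawtooth (branches m)`;
the exponent makes the entropy at the scale `blockStart m / branches m` beat
`|log (blockStart m)|`. -/
def branches (m : ℕ) : ℕ := 2 * 2 ^ (m * (m + 3)) + 1

theorem odd_branches (m : ℕ) : Odd (branches m) := odd_two_mul_add_one _

def localBump (m : ℕ) (x : ℝ) : ℝ :=
  blockStart m * sawtooth (branches m) ((x - blockStart m) / blockStart m) - (x - blockStart m)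

theorem localBump_blockStart (m : ℕ) : localBump m (blockStart m) = 0 := by
  simp [localBump, sawtooth_zero]

theorem localBump_two_mul_blockStart (m : ℕ) : localBump m (2 * blockStart m) = 0 := by
  have ha := (blockStart_pos m).ne'
  rw [localBump, show 2 * blockStart m - blockStart m = blockStart m by ring, div_self ha,
    sawtooth_one_of_odd (odd_branches m), mul_one, sub_self]

theorem blockStart_le_two_mul (m : ℕ) : blockStart m ≤ 2 * blockStart m := by
  linarith [blockStart_pos m]

def bump (m : ℕ) : ℝ → ℝ :=
  IccExtend (blockStart_le_two_mul m) (localBump m ∘ Subtype.val)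

theorem continuous_bump (m : ℕ) : Continuous (bump m) := by
  refine Continuous.Icc_extend' (Continuous.comp ?_ continuous_subtype_val)
  unfold localBump sawtooth
  fun_prop

theorem norm_bump_le (m : ℕ) (x : ℝ) : ‖bump m x‖ ≤ blockStart m := by
  change ‖localBump m (projIcc _ _ (blockStart_le_two_mul m) x)‖ ≤ _
  generalize projIcc _ _ (blockStart_le_two_mul m) x = y
  obtain ⟨y, hy1, hy2⟩ := y
  obtain ⟨h0, h1⟩ := triangleWave_mem_Icc (branches m * ((y - blockStart m) / blockStart m))
  have ha := blockStart_pos m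
  rw [localBump, sawtooth, Real.norm_eq_abs, abs_le]
  constructor <;> nlinarith

theorem bump_eq_zero_of_ne {m m' : ℕ} (hm : m' ≠ m) {x : ℝ}
    (hx : x ∈ Icc (blockStart m) (2 * blockStart m)) : bump m' x = 0 := by
  rcases hm.lt_or_gt with h | h
  · rw [bump, IccExtend_of_le_left _ _ (hx.2.trans (two_mul_blockStart_le_of_lt h))]
    exact localBump_blockStart m'
  · rw [bump, IccExtend_of_right_le _ _ ((two_mul_blockStart_le_of_lt h).trans hx.1)]
    exact localBump_two_mul_blockStart m'

def blockMap (x : ℝ) : ℝ := x + ∑' m, bump m x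

theorem continuous_blockMap : Continuous blockMap := by
  refine continuous_id.add (continuous_tsum continuous_bump ?_ norm_bump_le)
  exact (summable_nat_add_iff 1).2 (summable_geometric_of_lt_one (by norm_num) (by norm_num))

theorem blockMap_of_mem {m : ℕ} {x : ℝ} (hx : x ∈ Icc (blockStart m) (2 * blockStart m)) :
    blockMap x = blockStart m + blockStart m *
      sawtooth (branches m) ((x - blockStart m) / blockStart m) := by
  rw [blockMap, tsum_eq_single m fun m' hm' => bump_eq_zero_of_ne hm' hx, bump,
    IccExtend_of_mem _ _ hx, Function.comp_apply, localBump]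
  ring

theorem blockMap_zero : blockMap 0 = 0 := by
  have hbump (m : ℕ) : bump m 0 = 0 := by
    rw [bump, IccExtend_of_le_left _ _ (blockStart_pos m).le]
    exact localBump_blockStart m
  simp [blockMap, hbump]

theorem mapsTo_blockMap : MapsTo blockMap (Icc 0 1) (Icc 0 1) := by
  rintro x ⟨hx0, hx1⟩
  rcases hx0.eq_or_lt with rfl | hx0
  · rw [blockMap_zero]; exact left_mem_Icc.2 zero_le_one
  obtain ⟨m, hm⟩ := exists_mem_block hx0 hx1
  obtain ⟨h0, h1⟩ := triangleWave_mem_Icc (branches m * ((x - blockStart m) / blockStart m))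
  have ha := blockStart_pos m
  have ha1 := two_mul_blockStart_le_one m
  rw [blockMap_of_mem hm, sawtooth]
  constructor <;> nlinarith

theorem blockMap_affine {m : ℕ} {y : ℝ} (hy : y ∈ Icc (0 : ℝ) 1) :
    blockMap (blockStart m + blockStart m * y) =
      blockStart m + blockStart m * sawtooth (branches m) y := by
  have ha := blockStart_pos m
  have hmem : blockStart m + blockStart m * y ∈ Icc (blockStart m) (2 * blockStart m) :=
    ⟨by nlinarith [hy.1], by nlinarith [hy.2]⟩
  rw [blockMap_of_mem hmem, add_sub_cancel_left, mul_div_cancel_left₀ _ ha.ne']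

theorem blockMap_iterate_sawtoothCode (m j : ℕ) {s : List ℕ}
    (hs : ∀ c ∈ s, 2 * c + 1 ≤ branches m) :
    blockMap^[j] (blockStart m + blockStart m * sawtoothCode (branches m) s) =
      blockStart m + blockStart m * sawtoothCode (branches m) (s.drop j) := by
  induction j generalizing s with
  | zero => rfl
  | succ j ih =>
    rw [Function.iterate_succ_apply, blockMap_affine (sawtoothCode_mem_Icc hs),
      sawtooth_sawtoothCode hs, ih fun c hc => hs c (List.mem_of_mem_tail hc), List.drop_tail]

def blockMapIcc : Icc (0 : ℝ) 1 → Icc (0 : ℝ) 1 := mapsTo_blockMap.restrict _ _ _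

theorem continuous_blockMapIcc : Continuous blockMapIcc :=
  continuous_blockMap.restrict mapsTo_blockMap

theorem coe_blockMapIcc_iterate (j : ℕ) (x : Icc (0 : ℝ) 1) :
    (blockMapIcc^[j] x : ℝ) = blockMap^[j] x := by
  rw [blockMapIcc, mapsTo_blockMap.iterate_restrict]; rfl

theorem _root_.List.drop_ofFn_eq_cons {α : Type*} {n : ℕ} (f : Fin n → α) (j : Fin n) :
    (List.ofFn f).drop j = f j :: (List.ofFn f).drop (j + 1) := by
  rw [List.drop_eq_getElem_cons (by simp), List.getElem_ofFn]

abbrev Letter (m : ℕ) := Fin (2 ^ (m * (m + 3)))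

theorem two_mul_letter_add_one_le {m : ℕ} (c : Letter m) : 2 * (c : ℕ) + 1 ≤ branches m := by
  have := c.2; unfold branches; omega

theorem two_mul_add_one_le_of_mem_ofFn {m n : ℕ} (s : Fin n → Letter m) :
    ∀ c ∈ List.ofFn (fun i => (s i : ℕ)), 2 * c + 1 ≤ branches m := by
  simp only [List.mem_ofFn]
  rintro _ ⟨i, rfl⟩
  exact two_mul_letter_add_one_le (s i)

def codePoint (m : ℕ) {n : ℕ} (s : Fin n → Letter m) : Icc (0 : ℝ) 1 :=
  ⟨blockStart m + blockStart m * sawtoothCode (branches m) (List.ofFn fun i => (s i : ℕ)), by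
    have ha := blockStart_pos m
    have ha1 := two_mul_blockStart_le_one m
    obtain ⟨h0, h1⟩ := sawtoothCode_mem_Icc (two_mul_add_one_le_of_mem_ofFn s)
    constructor <;> nlinarith⟩

theorem blockStart_div_branches_le_dynDist {m n : ℕ} {s s' : Fin n → Letter m}
    (hne : s ≠ s') :
    blockStart m / branches m ≤ dynDist blockMapIcc n (codePoint m s) (codePoint m s') := by
  obtain ⟨j, hj⟩ := Function.ne_iff.1 hne
  set w := List.ofFn fun i => (s i : ℕ)
  set w' := List.ofFn fun i => (s' i : ℕ)
  have hw : w.drop j = (s j : ℕ) :: w.drop (j + 1) := List.drop_ofFn_eq_cons _ j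
  have hw' : w'.drop j = (s' j : ℕ) :: w'.drop (j + 1) := List.drop_ofFn_eq_cons _ j
  have hv : ∀ c ∈ w.drop j, 2 * c + 1 ≤ branches m :=
    fun c hc => two_mul_add_one_le_of_mem_ofFn s c (List.mem_of_mem_drop hc)
  have hv' : ∀ c ∈ w'.drop j, 2 * c + 1 ≤ branches m :=
    fun c hc => two_mul_add_one_le_of_mem_ofFn s' c (List.mem_of_mem_drop hc)
  rw [hw] at hv
  rw [hw'] at hv'
  have hsep := inv_le_abs_sub_sawtoothCode (Fin.val_injective.ne hj) hv hv'
  refine le_trans ?_ (dist_iterate_le_dynDist blockMapIcc j.2 _ _)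
  rw [Subtype.dist_eq, coe_blockMapIcc_iterate, coe_blockMapIcc_iterate, codePoint, codePoint,
    blockMap_iterate_sawtoothCode m j (two_mul_add_one_le_of_mem_ofFn s),
    blockMap_iterate_sawtoothCode m j (two_mul_add_one_le_of_mem_ofFn s'), hw, hw',
    Real.dist_eq, add_sub_add_left_eq_sub, ← mul_sub, abs_mul, abs_of_pos (blockStart_pos m),
    div_eq_mul_inv]
  exact mul_le_mul_of_nonneg_left hsep (blockStart_pos m).le

theorem codePoint_injective (m n : ℕ) : Function.Injective (codePoint m (n := n)) := by
  intro s s' h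
  by_contra hne
  have hsep := blockStart_div_branches_le_dynDist hne
  rw [h, show dynDist blockMapIcc n (codePoint m s') (codePoint m s') = 0 by simp [dynDist]]
    at hsep
  have : (0 : ℝ) < branches m := by exact_mod_cast (odd_branches m).pos
  exact (div_pos (blockStart_pos m) this).not_ge hsep

theorem pow_le_dynSepNum_blockMapIcc {m n : ℕ} {ε : ℝ} (hε : 0 < ε)
    (hεm : ε < blockStart m / branches m) :
    (2 ^ (m * (m + 3))) ^ n ≤ dynSepNum blockMapIcc n ε := by
  classical
  have hcard : (Finset.univ.image (codePoint m (n := n))).card = (2 ^ (m * (m + 3))) ^ n := by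
    simp [Finset.card_image_of_injective _ (codePoint_injective m n)]
  rw [← hcard]
  refine card_le_dynSepNum blockMapIcc (fun _ hE => card_le_of_dynSeparated blockMapIcc hε hE) ?_
  simp only [IsDynSeparated, Finset.mem_image, Finset.mem_univ, true_and]
  rintro _ ⟨s, rfl⟩ _ ⟨s', rfl⟩ hne
  exact hεm.trans_le (blockStart_div_branches_le_dynDist fun h => hne (h ▸ rfl))

/-- A scale below the separation `blockStart m / branches m` of the `m`-th block, chosen so
that `|log|` of it is exactly `(m + 1) * (m + 3) * log 2`. -/
def separationScale (m : ℕ) : ℝ := (1 / 2) ^ ((m + 1) * (m + 3))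

theorem separationScale_pos (m : ℕ) : 0 < separationScale m := by
  unfold separationScale; positivity

theorem separationScale_lt (m : ℕ) : separationScale m < blockStart m / branches m := by
  have hk : (branches m : ℝ) = 2 * 2 ^ (m * (m + 3)) + 1 := by simp [branches]
  have hsplit : separationScale m = blockStart m * (1 / 2) ^ (m * (m + 3) + 2) := by
    rw [separationScale, blockStart, ← pow_add]; ring_nf
  rw [lt_div_iff₀ (by rw [hk]; positivity), hsplit, mul_assoc]
  refine mul_lt_of_lt_one_right (blockStart_pos m) ?_
  rw [hk, one_div_pow, pow_add, div_mul_eq_mul_div, one_mul, div_lt_one (by positivity)]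
  have : (1 : ℝ) ≤ 2 ^ (m * (m + 3)) := one_le_pow₀ one_le_two
  linarith

theorem tendsto_separationScale : Tendsto separationScale atTop (𝓝[>] 0) := by
  refine tendsto_nhdsWithin_iff.2 ⟨?_, Eventually.of_forall separationScale_pos⟩
  refine (tendsto_pow_atTop_nhds_zero_of_lt_one (by norm_num) (by norm_num)).comp ?_
  exact tendsto_atTop_mono (fun m => show m ≤ (m + 1) * (m + 3) by nlinarith) tendsto_id

theorem ofReal_div_le_dynS_blockMapIcc_div (m : ℕ) :
    ENNReal.ofReal (m / (m + 1)) ≤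
      dynS blockMapIcc (separationScale m) / ENNReal.ofReal |log (separationScale m)| := by
  have hlog2 := log_pos one_lt_two
  have hscale : |log (separationScale m)| = (m + 1) * (m + 3) * log 2 := by
    rw [separationScale, log_pow, one_div, log_inv, abs_mul, abs_neg, abs_of_pos hlog2]
    rw [abs_of_nonneg (by positivity)]; push_cast; ring
  have hdynS : ENNReal.ofReal (m * (m + 3) * log 2) ≤ dynS blockMapIcc (separationScale m) := by
    have := ofReal_log_le_limsup_ofReal_log_div fun n =>
      pow_le_dynSepNum_blockMapIcc (separationScale_pos m) (separationScale_lt m) (n := n)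
    simpa [dynS, log_pow] using this
  calc ENNReal.ofReal (m / (m + 1))
      = ENNReal.ofReal (m * (m + 3) * log 2) / ENNReal.ofReal |log (separationScale m)| := by
        rw [← ENNReal.ofReal_div_of_pos (by rw [hscale]; positivity), hscale]
        congr 1; field_simp
    _ ≤ _ := ENNReal.div_le_div_right hdynS _

theorem one_le_mdim_blockMapIcc : 1 ≤ mdim blockMapIcc := by
  have hlim : Tendsto (fun m : ℕ => ENNReal.ofReal (m / (m + 1))) atTop (𝓝 1) := by
    simpa using ENNReal.tendsto_ofReal (tendsto_natCast_div_add_atTop (1 : ℝ))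
  calc 1 = atTop.limsup fun m : ℕ => ENNReal.ofReal (m / (m + 1)) := hlim.limsup_eq.symm
    _ ≤ atTop.limsup
          ((fun ε => dynS blockMapIcc ε / ENNReal.ofReal |log ε|) ∘ separationScale) :=
        limsup_le_limsup (Eventually.of_forall ofReal_div_le_dynS_blockMapIcc_div)
    _ ≤ mdim blockMapIcc := by
        rw [limsup_comp]; exact limsup_le_limsup_of_le tendsto_separationScale

end

end MdimExample

/-- **Proposition 5.3**: there exists a continuous self-map of `[0,1]` (with the Euclidean
metric) with maximal upper metric mean dimension, namely `mdim([0,1],d,f) = 1`. -/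
theorem exists_continuous_map_mdim_eq_one :
    ∃ f : (Set.Icc (0:ℝ) 1) → (Set.Icc (0:ℝ) 1), Continuous f ∧ mdim f = 1 :=
  ⟨MdimExample.blockMapIcc, MdimExample.continuous_blockMapIcc,
    (MdimExample.mdim_le_one _).antisymm MdimExample.one_le_mdim_blockMapIcc⟩
end
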